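/- Let G be a finite abelian p-group and H = G[p] its subgroup of elements of order dividing p. Then the ideal I(H) of Z_p G generated by {h − 1 : h ∈ H} has Z_p-dimension |G| − |G^p|, where G^p = {g^p : g ∈ G}; in particular the p-rank of V(Z_p G) equals |G| − |G^p|. -/

import Mathlib

/-- The augmentation map of a group ring. -/
noncomputable def aug (R G : Type*) [CommRing R] [CommGroup G] :
    MonoidAlgebra R G →ₐ[R] R := MonoidAlgebra.lift R R G 1

/-- The ideal of the group algebra generated by `h - 1` for `h ∈ G[p]`. -/
noncomputable def idealGp (p : ℕ) (R G : Type*) [CommRing R] [CommGroup G] :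
    Ideal (MonoidAlgebra R G) :=
  Ideal.span {x : MonoidAlgebra R G | ∃ h : G, h ^ p = 1 ∧ x = MonoidAlgebra.of R G h - 1}

/-!
Over `𝔽_p` the Frobenius `x ↦ x ^ p` of the commutative algebra `𝔽_p G` is the algebra map
induced by the group endomorphism `g ↦ g ^ p`, whose kernel is `G[p]`. For any group
homomorphism `φ : G → K`, the kernel of the induced map `R G → R K` is generated by the `h - 1`
with `h ∈ ker φ`: for a section `σ` of `φ` over its image, `x - σ_*(φ_* x)` lies in that ideal
for every `x`, since `g - σ(φ g)` is a multiple of `σ(φ g)⁻¹ g - 1`. Hence `I(G[p])` is the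
kernel of a linear map whose image is spanned by the basis elements indexed by `G^p`, and
rank–nullity gives `dim I(G[p]) = |G| - |G^p|`. Finally, `u ↦ u - 1` identifies the units with
`u ^ p = 1` (all of augmentation `1`) with the elements `x` with `x ^ p = 0`, that is with
`I(G[p])`, which has `p ^ dim` elements.
-/

namespace MonoidAlgebra

theorem mapDomain_comp {R M N O : Type*} [Semiring R] (f : M → N) (g : N → O)
    (x : MonoidAlgebra R M) : mapDomain (g ∘ f) x = mapDomain g (mapDomain f x) := by
  ext; simp [Finsupp.mapDomain_comp]

section Kernel

variable {R G K : Type*} [Ring R] [Group G] [Monoid K]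

theorem sub_mapDomain_mem_span_of_sub_one {τ : G → G} (φ : G →* K) (hτ : ∀ g, φ (τ g) = φ g)
    (x : MonoidAlgebra R G) :
    x - mapDomain τ x ∈ Ideal.span {y | ∃ h, φ h = 1 ∧ y = of R G h - 1} := by
  induction x using MonoidAlgebra.induction_linear with
  | zero => simp
  | add x y hx hy =>
    rw [mapDomain_add, add_sub_add_comm]
    exact add_mem hx hy
  | single g r =>
    have hker : φ ((τ g)⁻¹ * g) = 1 := by
      rw [map_mul, ← hτ g, ← map_mul, inv_mul_cancel, map_one]
    have hfactor : single (τ g) r * (of R G ((τ g)⁻¹ * g) - 1) = single g r - single (τ g) r := by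
      rw [mul_sub, mul_one, of_apply, single_mul_single, mul_inv_cancel_left, mul_one]
    rw [mapDomain_single, ← hfactor]
    exact Ideal.mul_mem_left _ _ (Ideal.subset_span ⟨_, hker, rfl⟩)

theorem ker_mapDomainRingHom (φ : G →* K) :
    RingHom.ker (mapDomainRingHom R φ) = Ideal.span {y | ∃ h, φ h = 1 ∧ y = of R G h - 1} := by
  refine le_antisymm (fun x hx => ?_) (Ideal.span_le.mpr ?_)
  · have hσ (g : G) : φ (Function.invFun φ (φ g)) = φ g := Function.invFun_eq ⟨g, rfl⟩
    have hx0 : mapDomain (Function.invFun φ ∘ φ) x = 0 := by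
      rw [mapDomain_comp, ← mapDomainRingHom_apply, RingHom.mem_ker.mp hx]
      simp
    simpa [hx0] using
      sub_mapDomain_mem_span_of_sub_one (R := R) (τ := Function.invFun φ ∘ φ) φ hσ x
  · rintro _ ⟨h, hh, rfl⟩
    rw [SetLike.mem_coe, RingHom.mem_ker, map_sub, map_one, mapDomainRingHom_apply, of_apply,
      mapDomain_single, hh, ← one_def, sub_self]

end Kernel

section Dimension

variable {k M N : Type*} [Field k]

theorem range_mapDomainLinearMap (f : M → N) :
    LinearMap.range (mapDomainLinearMap k k f) = supported k k (Set.range f) := by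
  have h := Finsupp.lmapDomain_supported (M := k) (R := k) f Set.univ
  rw [Finsupp.supported_univ, Submodule.map_top, Set.image_univ] at h
  rw [mapDomainLinearMap, LinearMap.range_comp, LinearMap.range_comp, LinearEquiv.range,
    Submodule.map_top, h, supported_eq_map]

theorem finrank_supported (s : Set M) [Fintype s] :
    Module.finrank k (supported k k s) = Fintype.card s := by
  rw [(supportedEquivFinsupp s).finrank_eq, Module.finrank_finsupp_self]

variable [Fintype M]

theorem finrank_eq_card : Module.finrank k (MonoidAlgebra k M) = Fintype.card M :=
  (coeffLinearEquiv k).finrank_eq.trans (Module.finrank_finsupp_self k)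

theorem finrank_ker_mapDomainLinearMap [DecidableEq N] (f : M → N) :
    Module.finrank k (LinearMap.ker (mapDomainLinearMap k k f)) =
      Fintype.card M - Fintype.card (Set.range f) := by
  have : Module.Finite k (MonoidAlgebra k M) := .equiv (coeffLinearEquiv k).symm
  have h := LinearMap.finrank_range_add_finrank_ker (mapDomainLinearMap k k f)
  rw [range_mapDomainLinearMap, finrank_supported, finrank_eq_card] at h
  omega

theorem finrank_ker_mapDomainRingHom [Group M] [Group N] (φ : M →* N) :
    Module.finrank k ((RingHom.ker (mapDomainRingHom k φ)).restrictScalars k) =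
      Fintype.card M - Nat.card φ.range := by
  classical
  rw [Nat.card_eq_fintype_card]
  exact finrank_ker_mapDomainLinearMap φ

end Dimension

instance charP {R M : Type*} [CommRing R] [Monoid M] (p : ℕ) [CharP R p] :
    CharP (MonoidAlgebra R M) p :=
  charP_of_injective_algebraMap' R p

theorem frobenius_eq_mapDomainRingHom (p : ℕ) [Fact p.Prime] (G : Type*) [CommMonoid G] :
    frobenius (MonoidAlgebra (ZMod p) G) p = mapDomainRingHom (ZMod p) (powMonoidHom p) := by
  refine ringHom_ext (fun r => ?_) (fun g => ?_) <;>
    simp [frobenius_def, single_pow, ZMod.pow_card]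

end MonoidAlgebra

def unitsPowEqOneEquivPowEqZero {R : Type*} [CommRing R] (p : ℕ) [hp : Fact p.Prime]
    [CharP R p] : {u : Rˣ // u ^ p = 1} ≃ {x : R // x ^ p = 0} where
  toFun u := ⟨(u.1 : R) - 1, by rw [sub_pow_char, ← Units.val_pow_eq_pow_val, u.2,
    Units.val_one, one_pow, sub_self]⟩
  invFun x := ⟨Units.ofPowEqOne (1 + x) p (by rw [add_pow_char, one_pow, x.2, add_zero])
    hp.out.ne_zero, Units.pow_ofPowEqOne _ _⟩
  left_inv u := by ext; simp
  right_inv x := by ext; simp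

theorem aug_eq_one_of_pow_eq_one {p : ℕ} [Fact p.Prime] {G : Type*} [CommGroup G]
    {x : MonoidAlgebra (ZMod p) G} (hx : x ^ p = 1) : aug (ZMod p) G x = 1 := by
  rw [← ZMod.pow_card (aug (ZMod p) G x), ← map_pow, hx, map_one]

open MonoidAlgebra in
theorem stmt_16_general (p : ℕ) (hp : p.Prime)
    (G : Type*) [CommGroup G] [Fintype G] :
    Module.finrank (ZMod p)
        (Submodule.restrictScalars (ZMod p) (idealGp p (ZMod p) G)) =
      Fintype.card G - Nat.card ((powMonoidHom p : G →* G).range) ∧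
    Nat.card {u : (MonoidAlgebra (ZMod p) G)ˣ //
        aug (ZMod p) G (u : MonoidAlgebra (ZMod p) G) = 1 ∧ u ^ p = 1} =
      p ^ (Fintype.card G - Nat.card ((powMonoidHom p : G →* G).range)) := by
  have : Fact p.Prime := ⟨hp⟩
  have hI : idealGp p (ZMod p) G =
      RingHom.ker (mapDomainRingHom (ZMod p) (powMonoidHom p : G →* G)) := by
    rw [ker_mapDomainRingHom]; rfl
  have hdim := hI ▸ finrank_ker_mapDomainRingHom (k := ZMod p) (powMonoidHom p : G →* G)
  have hnil : ∀ x : MonoidAlgebra (ZMod p) G, x ^ p = 0 ↔ x ∈ idealGp p (ZMod p) G := fun x => by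
    rw [hI, RingHom.mem_ker, ← frobenius_eq_mapDomainRingHom, frobenius_def]
  refine ⟨hdim, ?_⟩
  calc Nat.card {u : (MonoidAlgebra (ZMod p) G)ˣ // aug (ZMod p) G u = 1 ∧ u ^ p = 1}
      = Nat.card {u : (MonoidAlgebra (ZMod p) G)ˣ // u ^ p = 1} :=
        Nat.card_congr <| Equiv.subtypeEquivRight fun u => and_iff_right_of_imp fun hu =>
          aug_eq_one_of_pow_eq_one (by rw [← Units.val_pow_eq_pow_val, hu, Units.val_one])
    _ = Nat.card {x : MonoidAlgebra (ZMod p) G // x ^ p = 0} :=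
        Nat.card_congr (unitsPowEqOneEquivPowEqZero p)
    _ = Nat.card ((idealGp p (ZMod p) G).restrictScalars (ZMod p)) :=
        Nat.card_congr (Equiv.subtypeEquivRight hnil)
    _ = _ := by rw [Module.natCard_eq_pow_finrank (K := ZMod p), hdim, Nat.card_zmod]

/-- The ideal `I(G[p])` of `Z_p G` has `Z_p`-dimension `|G| - |G^p|`, and the
`p`-rank of `V(Z_p G)` is `|G| - |G^p|`. -/
theorem stmt_16 (p : ℕ) (hp : p.Prime)
    (G : Type*) [CommGroup G] [Fintype G] (hG : IsPGroup p G) :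
    Module.finrank (ZMod p)
        (Submodule.restrictScalars (ZMod p) (idealGp p (ZMod p) G)) =
      Fintype.card G - Nat.card ((powMonoidHom p : G →* G).range) ∧
    Nat.card {u : (MonoidAlgebra (ZMod p) G)ˣ //
        aug (ZMod p) G (u : MonoidAlgebra (ZMod p) G) = 1 ∧ u ^ p = 1} =
      p ^ (Fintype.card G - Nat.card ((powMonoidHom p : G →* G).range)) :=
  stmt_16_general p hp G
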